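/- Let d ≥ 3 and Ω ⊂ ℝ^d be a bounded C^{1,1} domain. Suppose G: Ω × Ω → [0,∞] satisfies G(x,y) ≍ ‖x−y‖^{2−d} · min(1, δ_Ω(x)/‖x−y‖) · min(1, δ_Ω(y)/‖x−y‖). Let F ∈ L^∞(Ω) be nonnegative with F > 0 on a set of positive measure, and set u(x) = ∫_Ω G(x,y)F(y) dy. Then there exists c > 0 such that u(x) ≥ c·δ_Ω(x) for all x ∈ Ω. -/

import Mathlib

open MeasureTheory Set Metric ENNReal

/-- A bounded open set satisfies the two-sided ball condition (equivalent to `C^{1,1}`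
regularity of the boundary). -/
def TwoSidedBallCond {d : ℕ} (Ω : Set (EuclideanSpace ℝ (Fin d))) (r : ℝ) : Prop :=
  0 < r ∧ ∀ x ∈ frontier Ω, ∃ y z : EuclideanSpace ℝ (Fin d),
    Metric.ball y r ⊆ Ω ∧ dist x y = r ∧
    Metric.ball z r ⊆ (closure Ω)ᶜ ∧ dist x z = r

/-! Since `δ_Ω > 0` on the open set `Ω`, there is a set `K ⊆ Ω` of positive measure on which both
`F` and `δ_Ω` are at least some `η > 0`. For `y ∈ K` every factor of the profile is bounded below
in terms of the diameter bound `D` of `Ω`: `‖x - y‖ ^ (2 - d) ≥ D ^ (2 - d)` because `2 - d ≤ 0`,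
`min 1 (δ_Ω x / ‖x - y‖) ≥ δ_Ω x / D` and `min 1 (δ_Ω y / ‖x - y‖) ≥ η / D`. Integrating over `K`
gives `u x ≳ η² |K| D ^ (-d) δ_Ω x`. -/

theorem div_le_min_one_div {a b n D : ℝ} (ha : 0 ≤ a) (hab : a ≤ b) (hn : 0 < n) (hnD : n ≤ D)
    (hbD : b ≤ D) : a / D ≤ min 1 (b / n) :=
  have hD : 0 < D := hn.trans_le hnD
  le_min ((div_le_one hD).2 (hab.trans hbD))
    ((div_le_div_of_nonneg_right hab hD.le).trans (div_le_div_of_nonneg_left (ha.trans hab) hn hnD))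

section Normed

variable {E : Type*} [NormedAddCommGroup E]

/-- The Green function of a `C^{1,1}` domain in `ℝ^d` is comparable to this profile with
`p = 2 - d`. -/
noncomputable def greenProfile (p : ℝ) (Ω : Set E) (x y : E) : ℝ :=
  ‖x - y‖ ^ p * min 1 (infDist x Ωᶜ / ‖x - y‖) * min 1 (infDist y Ωᶜ / ‖x - y‖)

theorem rpow_div_mul_div_mul_infDist_le_greenProfile {p D η : ℝ} {Ω : Set E} {x y : E}
    (hp : p ≤ 0) (hxy : x ≠ y) (hxyD : ‖x - y‖ ≤ D) (hxD : infDist x Ωᶜ ≤ D) (hη : 0 ≤ η)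
    (hηy : η ≤ infDist y Ωᶜ) (hyD : infDist y Ωᶜ ≤ D) :
    D ^ p / D * (η / D) * infDist x Ωᶜ ≤ greenProfile p Ω x y := by
  have hn : 0 < ‖x - y‖ := norm_pos_iff.2 (sub_ne_zero.2 hxy)
  have hD : 0 < D := hn.trans_le hxyD
  have hx := div_le_min_one_div infDist_nonneg le_rfl hn hxyD hxD
  have hy := div_le_min_one_div hη hηy hn hxyD hyD
  have hmin : 0 ≤ min 1 (infDist x Ωᶜ / ‖x - y‖) := (div_nonneg infDist_nonneg hD.le).trans hx
  calc D ^ p / D * (η / D) * infDist x Ωᶜ = D ^ p * (infDist x Ωᶜ / D) * (η / D) := by ring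
    _ ≤ greenProfile p Ω x y :=
      mul_le_mul (mul_le_mul (Real.rpow_le_rpow_of_nonpos hn hxyD hp) hx
        (div_nonneg infDist_nonneg hD.le) (by positivity)) hy (by positivity)
        (mul_nonneg (by positivity) hmin)

variable [NormedSpace ℝ E] [Nontrivial E] {s : Set E}

theorem Bornology.IsBounded.nonempty_compl (hs : Bornology.IsBounded s) : sᶜ.Nonempty :=
  Set.nonempty_compl.2 fun h => NormedSpace.unbounded_univ ℝ E (h ▸ hs)

theorem Bornology.IsBounded.exists_norm_sub_le_and_infDist_compl_le (hs : Bornology.IsBounded s) :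
    ∃ D > 0, (∀ x ∈ s, ∀ y ∈ s, ‖x - y‖ ≤ D) ∧ ∀ x ∈ s, infDist x sᶜ ≤ D := by
  obtain ⟨R, hR, hsR⟩ := hs.subset_ball_lt 0 0
  obtain ⟨z, hz⟩ := exists_norm_eq E hR.le
  have hzs : z ∈ sᶜ := fun hzs => (mem_ball_zero_iff.1 (hsR hzs)).ne hz
  refine ⟨2 * R, by positivity, fun x hx y hy => ?_, fun x hx => ?_⟩
  · linarith [norm_sub_le x y, mem_ball_zero_iff.1 (hsR hx), mem_ball_zero_iff.1 (hsR hy)]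
  · linarith [infDist_le_dist_of_mem (x := x) hzs, dist_le_norm_add_norm x z,
      mem_ball_zero_iff.1 (hsR hx)]

end Normed

theorem exists_pos_measure_setOf_le {α : Type*} [MeasurableSpace α] {μ : Measure α} {s : Set α}
    {f : α → ℝ} (h : 0 < μ {y ∈ s | 0 < f y}) : ∃ η > 0, 0 < μ {y ∈ s | η ≤ f y} := by
  by_contra! hnull
  have hcover : {y ∈ s | 0 < f y} ⊆ ⋃ n : ℕ, {y ∈ s | 1 / (n + 1 : ℝ) ≤ f y} := by
    rintro y ⟨hys, hfy⟩
    obtain ⟨n, hn⟩ := exists_nat_one_div_lt hfy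
    exact mem_iUnion.2 ⟨n, hys, hn.le⟩
  refine h.ne' (measure_mono_null hcover (measure_iUnion_null fun n => ?_))
  exact nonpos_iff_eq_zero.1 (hnull _ Nat.one_div_pos_of_nat)

theorem mul_measure_le_setLIntegral {α : Type*} [MeasurableSpace α] {μ : Measure α}
    [NullSingletonClass μ] {s K : Set α} (hK : MeasurableSet K) (hKs : K ⊆ s) {f : α → ℝ≥0∞}
    {a : ℝ≥0∞} (x : α) (hf : ∀ y ∈ K, y ≠ x → a ≤ f y) : a * μ K ≤ ∫⁻ y in s, f y ∂μ :=
  calc a * μ K = ∫⁻ _ in K, a ∂μ := (setLIntegral_const K a).symm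
    _ ≤ ∫⁻ y in K, f y ∂μ :=
      lintegral_mono_ae ((ae_restrict_iff' hK).2 ((Measure.ae_ne μ x).mono
        fun y hyx hyK => hf y hyK hyx))
    _ ≤ ∫⁻ y in s, f y ∂μ := lintegral_mono_set hKs

theorem stmt15_general (d : ℕ) (hd : 3 ≤ d) (Ω : Set (EuclideanSpace ℝ (Fin d)))
    (hΩo : IsOpen Ω) (hΩb : Bornology.IsBounded Ω)
    (G : EuclideanSpace ℝ (Fin d) → EuclideanSpace ℝ (Fin d) → ℝ≥0∞)
    (c₁ c₂ : ℝ) (hc₁ : 0 < c₁)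
    (hG : ∀ x ∈ Ω, ∀ y ∈ Ω, x ≠ y →
      ENNReal.ofReal (c₁ * (‖x - y‖ ^ (2 - (d : ℝ))
          * min 1 (infDist x Ωᶜ / ‖x - y‖) * min 1 (infDist y Ωᶜ / ‖x - y‖))) ≤ G x y ∧
      G x y ≤ ENNReal.ofReal (c₂ * (‖x - y‖ ^ (2 - (d : ℝ))
          * min 1 (infDist x Ωᶜ / ‖x - y‖) * min 1 (infDist y Ωᶜ / ‖x - y‖))))
    (F : EuclideanSpace ℝ (Fin d) → ℝ) (hFm : Measurable F)
    (hFpos : 0 < volume {y ∈ Ω | 0 < F y}) :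
    ∃ c : ℝ, 0 < c ∧ ∀ x ∈ Ω,
      ENNReal.ofReal (c * infDist x Ωᶜ) ≤ ∫⁻ y in Ω, G x y * ENNReal.ofReal (F y) := by
  have : NeZero d := ⟨by omega⟩
  have hp : 2 - (d : ℝ) ≤ 0 := by
    have : (3 : ℝ) ≤ d := by exact_mod_cast hd
    linarith
  obtain ⟨D, hD, hdist, hδD⟩ := hΩb.exists_norm_sub_le_and_infDist_compl_le
  have hδpos : ∀ y ∈ Ω, 0 < infDist y Ωᶜ := fun y hy =>
    (hΩo.isClosed_compl.notMem_iff_infDist_pos hΩb.nonempty_compl).1 (· hy)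
  obtain ⟨η, hη, hK⟩ : ∃ η > 0, 0 < volume {y ∈ Ω | η ≤ min (F y) (infDist y Ωᶜ)} := by
    refine exists_pos_measure_setOf_le (hFpos.trans_eq (congr_arg volume
      (Set.ext fun y => and_congr_right fun hy => ?_)))
    exact (lt_min_iff.trans (and_iff_left (hδpos y hy))).symm
  set K := {y ∈ Ω | η ≤ min (F y) (infDist y Ωᶜ)}
  have hKmeas : MeasurableSet K :=
    hΩo.measurableSet.inter (measurableSet_le measurable_const (hFm.min measurable_infDist))
  have hKfin : volume K < ⊤ := (hΩb.subset (sep_subset _ _)).measure_lt_top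
  set κ := D ^ (2 - (d : ℝ)) / D * (η / D)
  refine ⟨c₁ * κ * η * (volume K).toReal, mul_pos (by positivity) (toReal_pos hK.ne' hKfin.ne),
    fun x hx => ?_⟩
  calc ENNReal.ofReal (c₁ * κ * η * (volume K).toReal * infDist x Ωᶜ)
      = ENNReal.ofReal (c₁ * (κ * infDist x Ωᶜ)) * ENNReal.ofReal η * volume K := by
        rw [show c₁ * κ * η * (volume K).toReal * infDist x Ωᶜ
            = c₁ * (κ * infDist x Ωᶜ) * η * (volume K).toReal by ring,
          ofReal_mul' toReal_nonneg, ofReal_mul' hη.le, ofReal_toReal hKfin.ne]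
    _ ≤ ∫⁻ y in Ω, G x y * ENNReal.ofReal (F y) :=
        mul_measure_le_setLIntegral hKmeas (sep_subset _ _) x fun y ⟨hyΩ, hηy⟩ hyx =>
          mul_le_mul' ((ofReal_le_ofReal (mul_le_mul_of_nonneg_left
            (rpow_div_mul_div_mul_infDist_le_greenProfile hp hyx.symm (hdist x hx y hyΩ)
              (hδD x hx) hη.le (le_min_iff.1 hηy).2 (hδD y hyΩ)) hc₁.le)).trans
            (hG x hx y hyΩ hyx.symm).1) (ofReal_le_ofReal (le_min_iff.1 hηy).1)

/-- Hopf-type lower bound from Green function estimates: `d ≥ 3`, `Ω ⊂ ℝ^d` a bounded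
`C^{1,1}` domain, and `G : Ω × Ω → [0,∞]` two-sidedly comparable to the standard Green
function profile `‖x−y‖^{2−d}·min(1,δ(x)/‖x−y‖)·min(1,δ(y)/‖x−y‖)`. If `F ∈ L^∞(Ω)` is
nonnegative, measurable, and strictly positive on a set of positive measure, then
`u(x) = ∫_Ω G(x,y)F(y)dy` satisfies `u(x) ≥ c·δ_Ω(x)` on `Ω` for some `c > 0`. -/
theorem stmt15 (d : ℕ) (hd : 3 ≤ d) (Ω : Set (EuclideanSpace ℝ (Fin d)))
    (hΩo : IsOpen Ω) (hΩb : Bornology.IsBounded Ω) (hΩne : Ω.Nonempty)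
    (r : ℝ) (hC11 : TwoSidedBallCond Ω r)
    (G : EuclideanSpace ℝ (Fin d) → EuclideanSpace ℝ (Fin d) → ℝ≥0∞)
    (c₁ c₂ : ℝ) (hc₁ : 0 < c₁) (hc₂ : 0 < c₂)
    (hG : ∀ x ∈ Ω, ∀ y ∈ Ω, x ≠ y →
      ENNReal.ofReal (c₁ * (‖x - y‖ ^ (2 - (d : ℝ))
          * min 1 (infDist x Ωᶜ / ‖x - y‖) * min 1 (infDist y Ωᶜ / ‖x - y‖))) ≤ G x y ∧
      G x y ≤ ENNReal.ofReal (c₂ * (‖x - y‖ ^ (2 - (d : ℝ))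
          * min 1 (infDist x Ωᶜ / ‖x - y‖) * min 1 (infDist y Ωᶜ / ‖x - y‖))))
    (F : EuclideanSpace ℝ (Fin d) → ℝ) (hFm : Measurable F)
    (hFnonneg : ∀ y ∈ Ω, 0 ≤ F y) (M : ℝ) (hFbd : ∀ y ∈ Ω, F y ≤ M)
    (hFpos : 0 < volume {y ∈ Ω | 0 < F y}) :
    ∃ c : ℝ, 0 < c ∧ ∀ x ∈ Ω,
      ENNReal.ofReal (c * infDist x Ωᶜ) ≤ ∫⁻ y in Ω, G x y * ENNReal.ofReal (F y) :=
  stmt15_general d hd Ω hΩo hΩb G c₁ c₂ hc₁ hG F hFm hFpos
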